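/- arXiv:1310.8118 — 3 statements merged into one kernel-verified Lean document; each statement's English description precedes it below -/
import Mathlib

section
/- A sectionally contracting subspace and a sectionally expanding subspace of the tangent space at a fixed point of a linear flow intersect in a subspace of dimension at most 1. In particular, if E is sectionally contracting of dimension s+1 and F is sectionally expanding of dimension d−s+1 in a d-dimensional space, a contradiction arises since dim(E ∩ F) ≥ 2. -/
open scoped RealInnerProductSpace

/-- The (unsigned) area of the parallelogram spanned by `u` and `v`. -/
noncomputable def area {V : Type*} [NormedAddCommGroup V] [InnerProductSpace ℝ V]
    (u v : V) : ℝ :=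
  Real.sqrt (‖u‖ ^ 2 * ‖v‖ ^ 2 - ⟪u, v⟫ ^ 2)

/-- `S` is an invariant sectionally contracting subspace of the linear flow `Φ`:
on every 2-dimensional subspace of `S` the determinant (area) satisfies
`|det(Φ_t|_L)| ≤ C e^{-η t}` for `t ≥ 0`. -/
def SectionallyContracting {V : Type*} [NormedAddCommGroup V] [InnerProductSpace ℝ V]
    (Φ : ℝ → V →L[ℝ] V) (C η : ℝ) (S : Submodule ℝ V) : Prop :=
  (∀ t : ℝ, S.map (Φ t).toLinearMap ≤ S) ∧
  ∀ t : ℝ, 0 ≤ t → ∀ u ∈ S, ∀ v ∈ S,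
    area (Φ t u) (Φ t v) ≤ C * Real.exp (-η * t) * area u v

/-- `S` is an invariant sectionally expanding subspace of the linear flow `Φ`:
on every 2-dimensional subspace of `S`, `|det(Φ_t|_L)| ≥ C⁻¹ e^{η t}` for `t ≥ 0`. -/
def SectionallyExpanding {V : Type*} [NormedAddCommGroup V] [InnerProductSpace ℝ V]
    (Φ : ℝ → V →L[ℝ] V) (C η : ℝ) (S : Submodule ℝ V) : Prop :=
  (∀ t : ℝ, S.map (Φ t).toLinearMap ≤ S) ∧
  ∀ t : ℝ, 0 ≤ t → ∀ u ∈ S, ∀ v ∈ S,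
    C⁻¹ * Real.exp (η * t) * area u v ≤ area (Φ t u) (Φ t v)

/-!
On a plane inside `E ⊓ F` the flow multiplies areas by at least `C⁻¹ e^{ηt}` and at most
`C e^{-ηt}`, which is impossible once `e^{ηt} > C`; so `E ⊓ F` contains no plane. The second claim
is the dimension count `dim (E ⊓ F) ≥ dim E + dim F - d = 2`.
-/

section

variable {V : Type*} [NormedAddCommGroup V] [InnerProductSpace ℝ V]

-- Equality in Cauchy–Schwarz would make `v` a multiple of `u`.
lemma area_pos_of_linearIndependent {u v : V} (h : LinearIndependent ℝ ![u, v]) :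
    0 < area u v := by
  have hu : u ≠ 0 := by simpa using h.ne_zero 0
  have hv : v ≠ 0 := by simpa using h.ne_zero 1
  refine Real.sqrt_pos.mpr (sub_pos.mpr ?_)
  have hcs : |⟪u, v⟫| < ‖u‖ * ‖v‖ := by
    refine (abs_real_inner_le_norm u v).lt_of_ne fun heq => ?_
    obtain ⟨r, -, rfl⟩ := (norm_inner_eq_norm_iff (𝕜 := ℝ) hu hv).mp (by rwa [Real.norm_eq_abs])
    exact (LinearIndependent.pair_iff' hu).mp h r rfl
  rw [← mul_pow, ← sq_abs]
  exact pow_lt_pow_left₀ hcs (abs_nonneg _) two_ne_zero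

lemma area_eq_zero_of_contracting_of_expanding {Φ : ℝ → V → V} {C η : ℝ} (hC : 0 < C)
    (hη : 0 < η) {u v : V}
    (hcon : ∀ t : ℝ, 0 ≤ t → area (Φ t u) (Φ t v) ≤ C * Real.exp (-η * t) * area u v)
    (hexp : ∀ t : ℝ, 0 ≤ t → C⁻¹ * Real.exp (η * t) * area u v ≤ area (Φ t u) (Φ t v)) :
    area u v = 0 := by
  by_contra hne
  have hA : 0 < area u v := (Real.sqrt_nonneg _).lt_of_ne' hne
  -- at time `t = C / η` the growth factor `e^{ηt} = e^C` already exceeds `C`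
  set t := C / η
  have hηt : η * t = C := mul_div_cancel₀ C hη.ne'
  have hsq : C⁻¹ * Real.exp C ≤ C * (Real.exp C)⁻¹ := by
    have := (hexp t (by positivity)).trans (hcon t (by positivity))
    rwa [neg_mul, hηt, Real.exp_neg, mul_le_mul_iff_left₀ hA] at this
  have hle : Real.exp C ≤ C := by
    rw [inv_mul_le_iff₀ hC, ← mul_assoc, le_mul_inv_iff₀ (Real.exp_pos C)] at hsq
    exact (mul_self_le_mul_self_iff (Real.exp_pos C).le hC.le).mpr hsq
  linarith [Real.add_one_lt_exp hC.ne']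

lemma finrank_inf_le_one_of_sectionallyContracting_of_sectionallyExpanding
    {Φ : ℝ → V →L[ℝ] V} {C η : ℝ} (hC : 0 < C) (hη : 0 < η) {E F : Submodule ℝ V}
    (hE : SectionallyContracting Φ C η E) (hF : SectionallyExpanding Φ C η F) :
    Module.finrank ℝ ↥(E ⊓ F) ≤ 1 := by
  by_contra! hlt
  have : Nontrivial ↥(E ⊓ F) := Module.nontrivial_of_finrank_pos (one_pos.trans hlt)
  obtain ⟨x, hx⟩ := exists_ne (0 : ↥(E ⊓ F))
  obtain ⟨y, hxy⟩ := exists_linearIndependent_pair_of_one_lt_finrank hlt hx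
  have hpair : LinearIndependent ℝ ![(x : V), y] := by
    have hcoe : (E ⊓ F).subtype ∘ ![x, y] = ![(x : V), y] := by
      ext i; fin_cases i <;> rfl
    exact hcoe ▸ hxy.map' _ (E ⊓ F).ker_subtype
  refine (area_pos_of_linearIndependent hpair).ne' ?_
  exact area_eq_zero_of_contracting_of_expanding (Φ := fun t => Φ t) hC hη
    (fun t ht => hE.2 t ht x x.2.1 y y.2.1) (fun t ht => hF.2 t ht x x.2.2 y y.2.2)

end

theorem secContracting_inter_secExpanding_general {V : Type*} [NormedAddCommGroup V]
    [InnerProductSpace ℝ V] [FiniteDimensional ℝ V]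
    (Φ : ℝ → V →L[ℝ] V)
    (C η : ℝ) (hC : 1 ≤ C) (hη : 0 < η)
    (E F : Submodule ℝ V)
    (hE : SectionallyContracting Φ C η E) (hF : SectionallyExpanding Φ C η F)
    (d s : ℕ) (hd : Module.finrank ℝ V = d) :
    Module.finrank ℝ ↥(E ⊓ F) ≤ 1 ∧
      (Module.finrank ℝ ↥E = s + 1 → Module.finrank ℝ ↥F = d - s + 1 → s ≤ d →
        False) := by
  have hinf := finrank_inf_le_one_of_sectionallyContracting_of_sectionallyExpanding
    (zero_lt_one.trans_le hC) hη hE hF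
  refine ⟨hinf, fun hEr hFr hs => ?_⟩
  have hsum := Submodule.finrank_sup_add_finrank_inf_eq E F
  have hsup : Module.finrank ℝ ↥(E ⊔ F) ≤ d := hd ▸ Submodule.finrank_le _
  omega

/-- A sectionally contracting and a sectionally expanding invariant subspace of a linear
flow intersect in dimension at most 1; in particular `dim E = s+1` and
`dim F = d−s+1` in a `d`-dimensional space yields a contradiction. -/
theorem secContracting_inter_secExpanding {V : Type*} [NormedAddCommGroup V]
    [InnerProductSpace ℝ V] [FiniteDimensional ℝ V]
    (Φ : ℝ → V →L[ℝ] V)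
    (hΦ0 : Φ 0 = ContinuousLinearMap.id ℝ V)
    (hΦadd : ∀ t s : ℝ, Φ (t + s) = (Φ t).comp (Φ s))
    (C η : ℝ) (hC : 1 ≤ C) (hη : 0 < η)
    (E F : Submodule ℝ V)
    (hE : SectionallyContracting Φ C η E) (hF : SectionallyExpanding Φ C η F)
    (d s : ℕ) (hd : Module.finrank ℝ V = d) :
    Module.finrank ℝ ↥(E ⊓ F) ≤ 1 ∧
      (Module.finrank ℝ ↥E = s + 1 → Module.finrank ℝ ↥F = d - s + 1 → s ≤ d →
        False) :=
  secContracting_inter_secExpanding_general Φ C η hC hη E F hE hF d s hd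
end

section
/- Suppose a sequence of real numbers a_0, a_1, …, a_{n−1} each bounded above by a constant A satisfies ∑_{i=0}^{n−1} a_i ≤ −ηn for some η > 0. Then for any 0 < ε < η there exists an index 0 ≤ p < n such that ∑_{i=p}^{p+k−1} a_i ≤ −(η−ε)k for every 1 ≤ k ≤ n−p. (Pliss lemma, used with a_i = log‖∧²Φ_1|_{Φ_i(E)}‖.) -/
/-! Shift the sequence by `η - ε`. Its partial sums `S m = ∑_{i<m} (a i + (η - ε))` start at
`S 0 = 0` and end at `S n ≤ -ε n < 0`, so a maximiser `p` of `S` on `[0, n]` satisfies `p < n`,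
and every block sum `S (p + k) - S p` of the shifted sequence from `p` on is nonpositive. -/

open Finset

theorem Finset.exists_lt_forall_sum_Ico_nonpos {M : Type*} [AddCommGroup M] [LinearOrder M]
    [IsOrderedAddMonoid M] (b : ℕ → M) {n : ℕ} (hneg : ∑ i ∈ range n, b i < 0) :
    ∃ p < n, ∀ q, p ≤ q → q ≤ n → ∑ i ∈ Ico p q, b i ≤ 0 := by
  obtain ⟨p, hp, hmax⟩ := exists_max_image (range (n + 1)) (fun m => ∑ i ∈ range m, b i)
    nonempty_range_add_one
  have hpn : p < n := by
    refine lt_of_le_of_ne (Nat.lt_succ_iff.mp (mem_range.mp hp)) ?_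
    rintro rfl
    have h0 := hmax 0 (mem_range.mpr p.succ_pos)
    rw [range_zero, sum_empty] at h0
    exact (h0.trans_lt hneg).false
  refine ⟨p, hpn, fun q hpq hqn => ?_⟩
  rw [sum_Ico_eq_sub _ hpq, sub_nonpos]
  exact hmax q (mem_range.mpr (Nat.lt_succ_of_le hqn))

theorem Finset.sum_Ico_add_const {R : Type*} [NonAssocSemiring R] (a : ℕ → R) (c : R) (p k : ℕ) :
    ∑ i ∈ Ico p (p + k), (a i + c) = ∑ i ∈ Ico p (p + k), a i + k * c := by
  rw [sum_add_distrib, sum_const, Nat.card_Ico, Nat.add_sub_cancel_left, nsmul_eq_mul]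

theorem pliss_lemma_general (a : ℕ → ℝ) (n : ℕ) (hn : 0 < n) (η ε : ℝ)
    (hε : 0 < ε)
    (hsum : ∑ i ∈ Finset.range n, a i ≤ -η * n) :
    ∃ p < n, ∀ k : ℕ, 1 ≤ k → k ≤ n - p →
      ∑ i ∈ Finset.Ico p (p + k), a i ≤ -(η - ε) * k := by
  have hshift_neg : ∑ i ∈ range n, (a i + (η - ε)) < 0 := by
    have hn' : (0 : ℝ) < n := Nat.cast_pos.mpr hn
    rw [sum_add_distrib, sum_const, card_range, nsmul_eq_mul]
    linarith [mul_pos hε hn']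
  obtain ⟨p, hpn, hblock⟩ := exists_lt_forall_sum_Ico_nonpos _ hshift_neg
  refine ⟨p, hpn, fun k _ hk => ?_⟩
  have hshift_block := hblock (p + k) (Nat.le_add_right p k) (by omega)
  rw [sum_Ico_add_const] at hshift_block
  linarith

/-- Pliss lemma: if a sequence `a_0, …, a_{n−1}` bounded above by `A` satisfies
`∑ a_i ≤ −ηn`, then for any `0 < ε < η` there is an index `p < n` such that all
forward partial sums starting at `p` satisfy `∑_{i=p}^{p+k−1} a_i ≤ −(η−ε)k`. -/
theorem pliss_lemma (a : ℕ → ℝ) (n : ℕ) (hn : 0 < n) (A η ε : ℝ)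
    (hε : 0 < ε) (hεη : ε < η)
    (hbd : ∀ i < n, a i ≤ A)
    (hsum : ∑ i ∈ Finset.range n, a i ≤ -η * n) :
    ∃ p < n, ∀ k : ℕ, 1 ≤ k → k ≤ n - p →
      ∑ i ∈ Finset.Ico p (p + k), a i ≤ -(η - ε) * k :=
  pliss_lemma_general a n hn η ε hε hsum
end

section
/- Suppose a bundle map Φ on a direct sum N^s ⊕ E^{cu} over a compact space has block lower-triangular form Φ = [[A, 0],[C, D]] with ‖A(x)‖/m(D(x)) ≤ 1/2 for all x, where ‖C‖ is uniformly bounded. Then there exists a unique continuous Φ-invariant subbundle E^{ss} ⊂ N^s ⊕ E^{cu} which is a graph over N^s, i.e., E^{ss}(x) = {v + L(x)v : v ∈ N^s(x)} for a continuous bounded family of linear maps L(x): N^s(x) → E^{cu}(x). -/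
/-- Graph transform: a block lower-triangular bundle automorphism
`Φ(v,w) = (A v, C v + D w)` over a homeomorphism `f` of a compact space, with
`‖A‖/m(D) ≤ 1/2` and `‖C‖` uniformly bounded, admits a unique invariant subbundle
`E^{ss}` which is the graph of a continuous bounded family of linear maps
`L(x) : N^s(x) → E^{cu}(x)`, i.e. `E^{ss}(x) = {v + L(x)v}` and invariance reads
`C x v + D x (L x v) = L (f x) (A x v)`. -/
theorem graph_transform_invariant_subbundle {K Ns Ecu : Type*}
    [TopologicalSpace K] [CompactSpace K]
    [NormedAddCommGroup Ns] [NormedSpace ℝ Ns] [CompleteSpace Ns]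
    [NormedAddCommGroup Ecu] [NormedSpace ℝ Ecu] [CompleteSpace Ecu]
    (f : K ≃ₜ K)
    (A : K → Ns →L[ℝ] Ns) (Cm : K → Ns →L[ℝ] Ecu) (D : K → Ecu ≃L[ℝ] Ecu)
    (hA : Continuous A) (hCm : Continuous Cm)
    (hD : Continuous fun x => (D x : Ecu →L[ℝ] Ecu))
    (hDinv : Continuous fun x => ((D x).symm : Ecu →L[ℝ] Ecu))
    (hdom : ∀ x, ‖A x‖ * ‖((D x).symm : Ecu →L[ℝ] Ecu)‖ ≤ 1 / 2)
    (c₀ : ℝ) (hCbd : ∀ x, ‖Cm x‖ ≤ c₀) :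
    ∃! L : C(K, Ns →L[ℝ] Ecu),
      (∃ c : ℝ, ∀ x, ‖L x‖ ≤ c) ∧
      ∀ x (v : Ns), Cm x v + D x (L x v) = L (f x) (A x v) := by
  classical
  set T : C(K, Ns →L[ℝ] Ecu) → C(K, Ns →L[ℝ] Ecu) := fun L =>
    ⟨fun x => ((D x).symm : Ecu →L[ℝ] Ecu).comp ((L (f x)).comp (A x) - Cm x),
      Continuous.clm_comp hDinv
        (Continuous.sub (Continuous.clm_comp (L.continuous.comp f.continuous) hA) hCm)⟩
  -- fixed points of T ↔ the invariance equation
  have hfix : ∀ L : C(K, Ns →L[ℝ] Ecu),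
      (∀ x (v : Ns), Cm x v + D x (L x v) = L (f x) (A x v)) ↔ T L = L := by
    intro L
    constructor
    · intro h
      ext x v
      have := h x v
      simp only [T, ContinuousMap.coe_mk, ContinuousLinearMap.comp_apply,
        ContinuousLinearMap.sub_apply]
      have h2 : L (f x) (A x v) - Cm x v = D x (L x v) := by
        rw [← this]; abel
      rw [h2]; exact (D x).symm_apply_apply _
    · intro h x v
      have := congrFun (congrArg (fun g : C(K, Ns →L[ℝ] Ecu) => (g x : Ns → Ecu)) h) v
      simp only [T, ContinuousMap.coe_mk, ContinuousLinearMap.comp_apply,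
        ContinuousLinearMap.sub_apply] at this
      have h2 : D x ((D x).symm (L (f x) (A x v) - Cm x v)) = D x (L x v) :=
        congrArg (D x) this
      rw [ContinuousLinearEquiv.apply_symm_apply] at h2
      rw [← h2]; abel
  -- T is a contraction
  have hcontr : ContractingWith (2⁻¹ : NNReal) T := by
    constructor
    · exact_mod_cast (by norm_num : ((2:ℝ)⁻¹) < 1)
    · apply LipschitzWith.of_dist_le_mul
      intro L L'
      rw [ContinuousMap.dist_le (by positivity)]
      intro x
      rw [dist_eq_norm]
      have hx : T L x - T L' x
          = ((D x).symm : Ecu →L[ℝ] Ecu).comp (((L (f x)) - (L' (f x))).comp (A x)) := by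
        simp only [T, ContinuousMap.coe_mk]
        ext v
        simp [ContinuousLinearMap.comp_apply, ContinuousLinearMap.sub_apply]
      have : ‖T L x - T L' x‖ ≤ ‖((D x).symm : Ecu →L[ℝ] Ecu)‖ * (‖L (f x) - L' (f x)‖ * ‖A x‖) := by
        rw [hx]
        refine le_trans (ContinuousLinearMap.opNorm_comp_le _ _) ?_
        exact mul_le_mul_of_nonneg_left (ContinuousLinearMap.opNorm_comp_le _ _) (norm_nonneg _)
      refine this.trans ?_
      have hLL : ‖L (f x) - L' (f x)‖ ≤ dist L L' := by
        rw [← dist_eq_norm]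
        exact ContinuousMap.dist_apply_le_dist _
      have hAD : ‖((D x).symm : Ecu →L[ℝ] Ecu)‖ * ‖A x‖ ≤ 1/2 := by
        have := hdom x; linarith [mul_comm ‖A x‖ ‖((D x).symm : Ecu →L[ℝ] Ecu)‖]
      calc ‖((D x).symm : Ecu →L[ℝ] Ecu)‖ * (‖L (f x) - L' (f x)‖ * ‖A x‖)
          = (‖((D x).symm : Ecu →L[ℝ] Ecu)‖ * ‖A x‖) * ‖L (f x) - L' (f x)‖ := by ring
        _ ≤ (1/2) * dist L L' := by
            apply mul_le_mul hAD hLL (norm_nonneg _)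
            norm_num
        _ = ((2⁻¹ : NNReal) : ℝ) * dist L L' := by norm_num
  set L := hcontr.fixedPoint with hLdef
  refine ⟨L, ⟨⟨‖L‖, fun x => L.norm_coe_le_norm x⟩, (hfix L).2 hcontr.fixedPoint_isFixedPt⟩, ?_⟩
  intro L' hL'
  exact hcontr.fixedPoint_unique ((hfix L').1 hL'.2)
end
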